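/- The constants 3 and 2 in the median-distance upper bounds are tight on the real line: for every ε > 0 and every even k ≥ 4, (i) there exist a multiset W ⊂ ℝ of size k and w_opt ∈ ℝ with Δ_W(w_opt, γ) ≤ ε for some γ > 0, such that some y ∈ argmin_{w∈W} Δ_W(w,0) satisfies |w_opt − y| = 3ε; and (ii) there exist a multiset W' ⊂ ℝ of size k and w_opt' ∈ ℝ with Δ_{W'}(w_opt', γ') ≤ ε for some γ' > 0, such that some ȳ ∈ argmin_{w∈ℝ} Δ_{W'}(w,0) satisfies |w_opt' − ȳ| = 2ε. -/

import Mathlib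

/-!
Take `k = 2m` points: `-ε` once, `ε` `m` times and `3ε` `m - 1` times. The ball of radius `ε`
around `0` holds `m + 1` of them, a strict majority with some room to spare, so
`Δ(0, γ) ≤ ε` for a small `γ > 0`. The three values are `2ε` apart, so a ball of radius
`< ε` (anywhere) or of radius `< 2ε` around one of the values sees a single value, i.e. at
most `m = k/2` points: hence `Δ(x, 0) ≥ ε` everywhere and `Δ(w i, 0) ≥ 2ε` at the data points.
Both bounds are attained, at `2ε` and at the data point `3ε`, whose balls of radius `ε`
resp. `2ε` contain all `2m - 1` copies of `ε` and `3ε`.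
-/

open scoped Classical

/-- `Delta w x α` is Δ_W(x, α) on the real line: the minimal `r ≥ 0` such that the number
of points of the multiset `W = {w 1, …, w k}` within distance `r` of `x` exceeds
`k (1/2 + α)`. -/
noncomputable def Delta {k : ℕ} (w : Fin k → ℝ) (x : ℝ) (α : ℝ) : ℝ :=
  sInf {r : ℝ | 0 ≤ r ∧
    (k : ℝ) * (1 / 2 + α) < ((Finset.univ.filter fun i => |x - w i| ≤ r).card : ℝ)}

open Finset

noncomputable def threePoint (k m : ℕ) (a b c : ℝ) (i : Fin k) : ℝ :=
  if (i : ℕ) = 0 then a else if (i : ℕ) ≤ m then b else c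

section Delta

variable {k : ℕ} (w : Fin k → ℝ) (x α : ℝ)

theorem Delta_le_of_lt_card {r : ℝ} (hr : 0 ≤ r)
    (h : (k : ℝ) * (1 / 2 + α) < #{i | |x - w i| ≤ r}) : Delta w x α ≤ r :=
  csInf_le ⟨0, fun _ hs => hs.1⟩ ⟨hr, h⟩

theorem le_Delta_of_card_le (hk : 0 < k) (hα : α < 1 / 2) {b : ℝ}
    (h : ∀ r, 0 ≤ r → r < b → (#{i | |x - w i| ≤ r} : ℝ) ≤ k * (1 / 2 + α)) :
    b ≤ Delta w x α := by
  refine le_csInf ⟨∑ i, |x - w i|, sum_nonneg fun i _ => abs_nonneg _, ?_⟩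
    fun r ⟨hr, hcard⟩ => ?_
  · rw [filter_true_of_mem fun i _ =>
      single_le_sum (fun j _ => abs_nonneg (x - w j)) (mem_univ i)]
    simp only [card_univ, Fintype.card_fin]
    have : (0 : ℝ) < k := by exact_mod_cast hk
    nlinarith
  · by_contra! hrb
    exact (h r hr hrb).not_gt hcard

end Delta

theorem card_filter_threePoint {k m : ℕ} (hmk : m < k) (a b c : ℝ) (P : ℝ → Prop)
    [DecidablePred P] :
    #{i | P (threePoint k m a b c i)} =
      (if P a then 1 else 0) + (if P b then m else 0) + (if P c then k - (m + 1) else 0) := by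
  have block : ∀ (s t : ℕ) (y : ℝ),
      (∀ n ∈ Ico s t, (if n = 0 then a else if n ≤ m then b else c) = y) →
      ∑ n ∈ Ico s t, (if P (if n = 0 then a else if n ≤ m then b else c) then 1 else 0)
        = if P y then t - s else 0 := by
    intro s t y hy
    rw [sum_congr rfl fun n hn => by rw [hy n hn], sum_const, Nat.card_Ico]
    split_ifs <;> simp
  unfold threePoint
  rw [card_filter, Fin.sum_univ_eq_sum_range
      (fun n => if P (if n = 0 then a else if n ≤ m then b else c) then 1 else 0),
    range_eq_Ico, ← sum_Ico_consecutive _ (m + 1).zero_le hmk,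
    ← sum_Ico_consecutive _ zero_le_one (by omega : 1 ≤ m + 1),
    block 0 1 a, block 1 (m + 1) b, block (m + 1) k c]
  · simp only [Nat.sub_zero, Nat.add_sub_cancel]
  all_goals
    intro n hn
    rw [mem_Ico] at hn
    split_ifs <;> first | rfl | omega

theorem threePoint_eq_or {k m : ℕ} (a b c : ℝ) (i : Fin k) :
    threePoint k m a b c i = a ∨ threePoint k m a b c i = b ∨ threePoint k m a b c i = c := by
  unfold threePoint
  split_ifs <;> simp

noncomputable def tightConfig (ε : ℝ) (m : ℕ) : Fin (m + m) → ℝ :=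
  threePoint (m + m) m (-ε) ε (3 * ε)

section tightConfig

variable {ε : ℝ} {m : ℕ}

theorem card_filter_tightConfig (hm : 1 ≤ m) (x r : ℝ) :
    #{i | |x - tightConfig ε m i| ≤ r} =
      (if |x + ε| ≤ r then 1 else 0) + (if |x - ε| ≤ r then m else 0) +
        (if |x - 3 * ε| ≤ r then m - 1 else 0) := by
  rw [tightConfig, card_filter_threePoint (P := fun y => |x - y| ≤ r) (by omega), sub_neg_eq_add,
    show m + m - (m + 1) = m - 1 by omega]

theorem card_filter_tightConfig_le (hm : 1 ≤ m) {x r : ℝ}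
    (h₁₂ : ¬(|x + ε| ≤ r ∧ |x - ε| ≤ r)) (h₁₃ : ¬(|x + ε| ≤ r ∧ |x - 3 * ε| ≤ r))
    (h₂₃ : ¬(|x - ε| ≤ r ∧ |x - 3 * ε| ≤ r)) :
    #{i | |x - tightConfig ε m i| ≤ r} ≤ m := by
  rw [card_filter_tightConfig hm]
  split_ifs <;> first | omega | tauto

theorem Delta_tightConfig_zero_le (hε : 0 < ε) (hm : 1 ≤ m) :
    Delta (tightConfig ε m) 0 (1 / (4 * m)) ≤ ε := by
  refine Delta_le_of_lt_card _ _ _ hε.le ?_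
  rw [card_filter_tightConfig hm, if_pos (by simp [abs_of_pos hε]),
    if_pos (by simp [abs_of_pos hε]), if_neg (by rw [abs_le]; intro h; linarith)]
  have : (0 : ℝ) < m := by exact_mod_cast hm
  push_cast
  field_simp
  linarith

theorem Delta_tightConfig_le_of_near (hm : 2 ≤ m) {x r : ℝ} (hr : 0 ≤ r)
    (h₁ : |x - ε| ≤ r) (h₃ : |x - 3 * ε| ≤ r) : Delta (tightConfig ε m) x 0 ≤ r := by
  refine Delta_le_of_lt_card _ _ _ hr ?_
  rw [card_filter_tightConfig (by omega), if_pos h₁, if_pos h₃]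
  have : (2 : ℝ) ≤ m := by exact_mod_cast hm
  split_ifs <;> push_cast [Nat.cast_sub (by omega : 1 ≤ m)] <;> linarith

theorem le_Delta_tightConfig (hε : 0 < ε) (hm : 1 ≤ m) (x : ℝ) :
    ε ≤ Delta (tightConfig ε m) x 0 := by
  refine le_Delta_of_card_le _ _ _ (by omega) (by norm_num) fun r _ hr => ?_
  have hcard : #{i | |x - tightConfig ε m i| ≤ r} ≤ m := by
    apply card_filter_tightConfig_le hm <;> simp only [abs_le] <;> intro <;> linarith
  calc (#{i | |x - tightConfig ε m i| ≤ r} : ℝ) ≤ m := by exact_mod_cast hcard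
    _ = (m + m : ℕ) * (1 / 2 + 0) := by push_cast; ring

theorem le_Delta_tightConfig_apply (hε : 0 < ε) (hm : 1 ≤ m) (i : Fin (m + m)) :
    2 * ε ≤ Delta (tightConfig ε m) (tightConfig ε m i) 0 := by
  refine le_Delta_of_card_le _ _ _ (by omega) (by norm_num) fun r _ hr => ?_
  have hcard : #{j | |tightConfig ε m i - tightConfig ε m j| ≤ r} ≤ m := by
    have hy : tightConfig ε m i = -ε ∨ tightConfig ε m i = ε ∨ tightConfig ε m i = 3 * ε :=
      threePoint_eq_or _ _ _ i
    apply card_filter_tightConfig_le hm <;> rcases hy with h | h | h <;>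
      rw [h] <;> simp only [abs_le] <;> intro <;> linarith
  calc (#{j | |tightConfig ε m i - tightConfig ε m j| ≤ r} : ℝ) ≤ m := by exact_mod_cast hcard
    _ = (m + m : ℕ) * (1 / 2 + 0) := by push_cast; ring

end tightConfig

/-- **Theorem 18, tightness.**  The constants `3` and `2` in the median-distance upper
bounds are tight on the real line: for every `ε > 0` and every even `k ≥ 4`,
(i) there are a multiset `W ⊆ ℝ` of size `k` and `wopt ∈ ℝ` with `Δ_W(wopt, γ) ≤ ε` for
some `γ > 0`, such that some `y ∈ argmin_{w ∈ W} Δ_W(w, 0)` satisfies `|wopt - y| = 3ε`;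
(ii) there are a multiset `W' ⊆ ℝ` of size `k` and `wopt' ∈ ℝ` with `Δ_{W'}(wopt', γ') ≤ ε`
for some `γ' > 0`, such that some `ȳ ∈ argmin_{w ∈ ℝ} Δ_{W'}(w, 0)` satisfies
`|wopt' - ȳ| = 2ε`. -/
theorem stmt13 (ε : ℝ) (hε : 0 < ε) (k : ℕ) (hk : 4 ≤ k) (hke : Even k) :
    (∃ (w : Fin k → ℝ) (wopt γ : ℝ), 0 < γ ∧ Delta w wopt γ ≤ ε ∧
      ∃ iy : Fin k, (∀ i, Delta w (w iy) 0 ≤ Delta w (w i) 0) ∧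
        |wopt - w iy| = 3 * ε) ∧
    (∃ (w' : Fin k → ℝ) (wopt' γ' : ℝ), 0 < γ' ∧ Delta w' wopt' γ' ≤ ε ∧
      ∃ ybar : ℝ, (∀ x : ℝ, Delta w' ybar 0 ≤ Delta w' x 0) ∧
        |wopt' - ybar| = 2 * ε) := by
  obtain ⟨m, rfl⟩ := hke
  have hm : 2 ≤ m := by omega
  have hγ : (0 : ℝ) < 1 / (4 * m) := by positivity
  have hopt := Delta_tightConfig_zero_le hε (by omega : 1 ≤ m)
  have hy : tightConfig ε m ⟨m + 1, by omega⟩ = 3 * ε := by simp [tightConfig, threePoint]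
  refine ⟨⟨tightConfig ε m, 0, _, hγ, hopt, ⟨m + 1, by omega⟩, fun i => ?_, ?_⟩,
    ⟨tightConfig ε m, 0, _, hγ, hopt, 2 * ε, fun x => ?_, ?_⟩⟩
  · calc Delta (tightConfig ε m) (tightConfig ε m ⟨m + 1, _⟩) 0 ≤ 2 * ε := by
          rw [hy]; exact Delta_tightConfig_le_of_near hm (by positivity)
            (by rw [abs_of_pos (by linarith)]; linarith) (by simp [hε.le])
      _ ≤ _ := le_Delta_tightConfig_apply hε (by omega) i
  · rw [hy, zero_sub, abs_neg, abs_of_pos (by positivity)]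
  · calc Delta (tightConfig ε m) (2 * ε) 0 ≤ ε :=
          Delta_tightConfig_le_of_near hm hε.le (by rw [abs_of_pos (by linarith)]; linarith)
            (by rw [abs_le]; constructor <;> linarith)
      _ ≤ _ := le_Delta_tightConfig hε (by omega) x
  · rw [zero_sub, abs_neg, abs_of_pos (by positivity)]
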